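/- Let Φ be strictly stable, γ ∈ (0,1), and P̃ the solution of P̃ = γΦ^T P̃ Φ + C^T C. For vectors x_i = Φ^{i-N}(x_N − x^r) + x^r (i ≥ N), we have Σ_{i=N}^∞ γ^i ‖C x_i‖² = γ^N ‖x_N − x^r‖²_{P̃} + (γ^N/(1−γ)) ‖C x^r‖² + 2γ^N (x^r)^T C^T C (I − γΦ)^{-1} (x_N − x^r). -/

import Mathlib

/-!
Write `x_{N+k} = Φ^k e + x^r` with `e = x_N - x^r` and expand `‖C x_{N+k}‖²`: the three
resulting series are the quadratic form of `P̃` at `e`, a scalar geometric series, and the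
bilinear form of `Cᵀ C ∑ (γΦ)^k = Cᵀ C (I - γΦ)⁻¹`. All matrix series converge because, by
Gelfand's formula, `‖Φ^k‖ ≤ r^k` eventually for some `r < 1`.
-/

open Matrix

/-- Euclidean norm of a vector in `ℝ^m`. -/
noncomputable def euclNorm {m : ℕ} (v : Fin m → ℝ) : ℝ := Real.sqrt (∑ j, v j ^ 2)

open Filter
open scoped NNReal ENNReal

theorem eventually_norm_pow_le_of_spectralRadius_lt {A : Type*} [NormedRing A]
    [NormedAlgebra ℂ A] [CompleteSpace A] {a : A} {r : ℝ≥0} (h : spectralRadius ℂ a < r) :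
    ∀ᶠ k in atTop, ‖a ^ k‖ ≤ r ^ k := by
  filter_upwards [(spectrum.pow_nnnorm_pow_one_div_tendsto_nhds_spectralRadius a
    ).eventually_lt_const h, eventually_gt_atTop 0] with k hk hk0
  rw [one_div, ENNReal.rpow_inv_lt_iff (by positivity), ENNReal.rpow_natCast] at hk
  exact_mod_cast hk.le

theorem spectralRadius_lt_one_of_forall_norm_lt_one {A : Type*} [NormedRing A]
    [NormedAlgebra ℂ A] [CompleteSpace A] {a : A} (h : ∀ z ∈ spectrum ℂ a, ‖z‖ < 1) :
    spectralRadius ℂ a < 1 := by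
  rcases (spectrum ℂ a).eq_empty_or_nonempty with hσ | hσ
  · simp [spectralRadius, hσ]
  · exact_mod_cast spectrum.spectralRadius_lt_of_forall_lt_of_nonempty hσ (r := 1)
      fun z hz => by exact_mod_cast h z hz

theorem exists_norm_pow_le_geometric {A : Type*} [NormedRing A]
    [NormedAlgebra ℂ A] [CompleteSpace A] {a : A} (h : ∀ z ∈ spectrum ℂ a, ‖z‖ < 1) :
    ∃ r : ℝ, 0 ≤ r ∧ r < 1 ∧ ∀ᶠ k in atTop, ‖a ^ k‖ ≤ r ^ k := by
  obtain ⟨r, hρr, hr1⟩ :=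
    ENNReal.lt_iff_exists_nnreal_btwn.1 (spectralRadius_lt_one_of_forall_norm_lt_one h)
  exact ⟨r, r.2, by exact_mod_cast hr1, eventually_norm_pow_le_of_spectralRadius_lt hρr⟩

section Frobenius

/- The Frobenius norm is submultiplicative also on rectangular matrices and is invariant
under transposition and under the entrywise embedding `ℝ → ℂ`. -/
attribute [local instance] Matrix.frobeniusNormedAddCommGroup Matrix.frobeniusNormedSpace
  Matrix.frobeniusNormedRing Matrix.frobeniusNormedAlgebra

theorem Matrix.exists_frobenius_norm_pow_le_geometric {ι : Type*} [Fintype ι] [DecidableEq ι]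
    (Φ : Matrix ι ι ℝ) (hΦ : ∀ μ ∈ spectrum ℂ (Φ.map (algebraMap ℝ ℂ)), ‖μ‖ < 1) :
    ∃ r : ℝ, 0 ≤ r ∧ r < 1 ∧ ∀ᶠ k in atTop, ‖Φ ^ k‖ ≤ r ^ k := by
  have : CompleteSpace (Matrix ι ι ℂ) := FiniteDimensional.complete ℂ _
  obtain ⟨r, hr0, hr1, hev⟩ := exists_norm_pow_le_geometric hΦ
  refine ⟨r, hr0, hr1, hev.mono fun k hk => ?_⟩
  rwa [← Matrix.map_pow, frobenius_norm_map_eq _ _ (by simp)] at hk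

variable {ι κ : Type*} [Fintype ι] [DecidableEq ι] [Fintype κ]

theorem Matrix.summable_smul_pow_of_spectrum_lt_one {Φ : Matrix ι ι ℝ}
    (hΦ : ∀ μ ∈ spectrum ℂ (Φ.map (algebraMap ℝ ℂ)), ‖μ‖ < 1) {γ : ℝ} (hγ : |γ| ≤ 1) :
    Summable fun k : ℕ => (γ • Φ) ^ k := by
  obtain ⟨r, hr0, hr1, hev⟩ := Φ.exists_frobenius_norm_pow_le_geometric hΦ
  refine (summable_geometric_of_lt_one hr0 hr1).of_norm_bounded_eventually_nat ?_
  filter_upwards [hev] with k hk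
  rw [smul_pow, norm_smul, norm_pow, Real.norm_eq_abs]
  exact (mul_le_of_le_one_left (norm_nonneg _) (pow_le_one₀ (abs_nonneg γ) hγ)).trans hk

theorem Matrix.summable_pow_smul_transpose_mul_pow_of_spectrum_lt_one {Φ : Matrix ι ι ℝ}
    (hΦ : ∀ μ ∈ spectrum ℂ (Φ.map (algebraMap ℝ ℂ)), ‖μ‖ < 1) {γ : ℝ} (hγ : |γ| ≤ 1)
    (C : Matrix κ ι ℝ) :
    Summable fun k : ℕ => γ ^ k • ((Φ ^ k)ᵀ * Cᵀ * C * Φ ^ k) := by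
  obtain ⟨r, hr0, hr1, hev⟩ := Φ.exists_frobenius_norm_pow_le_geometric hΦ
  have hr2 : r ^ 2 < 1 := pow_lt_one₀ hr0 hr1 two_ne_zero
  refine ((summable_geometric_of_lt_one (by positivity) hr2).mul_left (‖C‖ ^ 2)
    ).of_norm_bounded_eventually_nat ?_
  filter_upwards [hev] with k hk
  have hgram : (Φ ^ k)ᵀ * Cᵀ * C * Φ ^ k = (C * Φ ^ k)ᵀ * (C * Φ ^ k) := by
    simp only [transpose_mul, Matrix.mul_assoc]
  calc ‖γ ^ k • ((Φ ^ k)ᵀ * Cᵀ * C * Φ ^ k)‖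
      ≤ ‖(C * Φ ^ k)ᵀ * (C * Φ ^ k)‖ := by
        rw [norm_smul, norm_pow, Real.norm_eq_abs, hgram]
        exact mul_le_of_le_one_left (norm_nonneg _) (pow_le_one₀ (abs_nonneg γ) hγ)
    _ ≤ ‖C * Φ ^ k‖ ^ 2 := by
        simpa only [frobenius_norm_transpose, sq] using
          frobenius_norm_mul (C * Φ ^ k)ᵀ (C * Φ ^ k)
    _ ≤ (‖C‖ * ‖Φ ^ k‖) ^ 2 := by
        gcongr
        exact frobenius_norm_mul C _
    _ ≤ ‖C‖ ^ 2 * (r ^ 2) ^ k := by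
        rw [mul_pow, ← pow_mul, mul_comm 2 k, pow_mul]
        gcongr

end Frobenius

theorem HasSum.dotProduct_mulVec {α R m n : Type*} [Fintype m] [Fintype n] [Semiring R]
    [TopologicalSpace R] [IsTopologicalSemiring R] {f : α → Matrix m n R} {S : Matrix m n R}
    (hf : HasSum f S) (u : m → R) (v : n → R) :
    HasSum (fun k => u ⬝ᵥ f k *ᵥ v) (u ⬝ᵥ S *ᵥ v) :=
  hf.map
    ({ toFun M := u ⬝ᵥ M *ᵥ v
       map_zero' := by rw [zero_mulVec, dotProduct_zero]
       map_add' M N := by rw [add_mulVec, dotProduct_add] } : Matrix m n R →+ R)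
    (continuous_const.dotProduct (continuous_id.matrix_mulVec continuous_const))

theorem Matrix.mulVec_dotProduct_mulVec {R l m n : Type*} [Fintype l] [Fintype m]
    [Fintype n] [CommSemiring R] (A : Matrix l m R) (B : Matrix l n R) (u : m → R) (v : n → R) :
    (A *ᵥ u) ⬝ᵥ (B *ᵥ v) = u ⬝ᵥ (Aᵀ * B) *ᵥ v := by
  rw [← mulVec_mulVec, dotProduct_transpose_mulVec, dotProduct_comm]

theorem euclNorm_sq_eq_dotProduct {m : ℕ} (v : Fin m → ℝ) : euclNorm v ^ 2 = v ⬝ᵥ v := by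
  rw [euclNorm, Real.sq_sqrt (by positivity)]
  simp only [dotProduct, sq]

theorem pow_mul_euclNorm_mulVec_pow_mulVec_add_sq {m : ℕ} {ι : Type*} [Fintype ι]
    [DecidableEq ι] (Φ : Matrix ι ι ℝ) (C : Matrix (Fin m) ι ℝ) (γ : ℝ) (e w : ι → ℝ) (k : ℕ) :
    γ ^ k * euclNorm (C *ᵥ (Φ ^ k *ᵥ e + w)) ^ 2 =
      e ⬝ᵥ (γ ^ k • ((Φ ^ k)ᵀ * Cᵀ * C * Φ ^ k)) *ᵥ e + euclNorm (C *ᵥ w) ^ 2 * γ ^ k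
        + 2 * (w ⬝ᵥ (Cᵀ * C * (γ • Φ) ^ k) *ᵥ e) := by
  have hquad : (C *ᵥ (Φ ^ k *ᵥ e)) ⬝ᵥ (C *ᵥ (Φ ^ k *ᵥ e))
      = e ⬝ᵥ ((Φ ^ k)ᵀ * Cᵀ * C * Φ ^ k) *ᵥ e := by
    rw [mulVec_mulVec, mulVec_dotProduct_mulVec, transpose_mul, Matrix.mul_assoc,
      Matrix.mul_assoc, Matrix.mul_assoc]
  have hcross : (C *ᵥ w) ⬝ᵥ (C *ᵥ (Φ ^ k *ᵥ e)) = w ⬝ᵥ (Cᵀ * C * Φ ^ k) *ᵥ e := by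
    rw [mulVec_mulVec, mulVec_dotProduct_mulVec, Matrix.mul_assoc]
  rw [euclNorm_sq_eq_dotProduct, euclNorm_sq_eq_dotProduct, mulVec_add, dotProduct_add,
    add_dotProduct, add_dotProduct, dotProduct_comm (C *ᵥ (Φ ^ k *ᵥ e)) (C *ᵥ w), hquad,
    hcross, smul_pow, Matrix.mul_smul, smul_mulVec, dotProduct_smul, smul_mulVec,
    dotProduct_smul, smul_eq_mul, smul_eq_mul]
  ring

/-- For strictly stable `Φ`, `γ ∈ (0,1)`, `P̃ = ∑ γ^i (Φ^i)ᵀ Cᵀ C Φ^i`, and the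
trajectory `x_i = Φ^{i-N}(x_N - x^r) + x^r` for `i ≥ N`, we have
`∑_{i=N}^∞ γ^i ‖C x_i‖² = γ^N ‖x_N - x^r‖²_{P̃} + (γ^N/(1-γ)) ‖C x^r‖²
  + 2 γ^N (x^r)ᵀ Cᵀ C (I - γΦ)⁻¹ (x_N - x^r)`. -/
theorem stmt4 {n m : ℕ} (Φ : Matrix (Fin n) (Fin n) ℝ) (C : Matrix (Fin m) (Fin n) ℝ)
    (γ : ℝ) (hγ : γ ∈ Set.Ioo (0 : ℝ) 1)
    (hΦ : ∀ μ ∈ spectrum ℂ (Φ.map (algebraMap ℝ ℂ)), ‖μ‖ < 1)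
    (N : ℕ) (xN xr : Fin n → ℝ) (x : ℕ → Fin n → ℝ)
    (hx : ∀ i : ℕ, x (N + i) = (Φ ^ i).mulVec (xN - xr) + xr)
    (P : Matrix (Fin n) (Fin n) ℝ)
    (hP : P = ∑' i : ℕ, γ ^ i • ((Φ ^ i)ᵀ * Cᵀ * C * Φ ^ i)) :
    (∑' i : ℕ, γ ^ (N + i) * euclNorm (C.mulVec (x (N + i))) ^ 2) =
      γ ^ N * ((xN - xr) ⬝ᵥ P.mulVec (xN - xr))
        + (γ ^ N / (1 - γ)) * euclNorm (C.mulVec xr) ^ 2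
        + 2 * γ ^ N * (xr ⬝ᵥ (Cᵀ * C * (1 - γ • Φ)⁻¹).mulVec (xN - xr)) := by
  obtain ⟨hγ0, hγ1⟩ := hγ
  have hγabs : |γ| ≤ 1 := (abs_of_pos hγ0).trans_le hγ1.le
  have hgeom := summable_smul_pow_of_spectrum_lt_one hΦ hγabs
  have hinv : (1 - γ • Φ)⁻¹ = ∑' k : ℕ, (γ • Φ) ^ k :=
    inv_eq_right_inv hgeom.one_sub_mul_tsum_pow
  have hgram : HasSum (fun k : ℕ => γ ^ k • ((Φ ^ k)ᵀ * Cᵀ * C * Φ ^ k)) P :=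
    hP ▸ (summable_pow_smul_transpose_mul_pow_of_spectrum_lt_one hΦ hγabs C).hasSum
  have hcross : HasSum (fun k : ℕ => Cᵀ * C * (γ • Φ) ^ k) (Cᵀ * C * (1 - γ • Φ)⁻¹) :=
    hinv ▸ hgeom.hasSum.mul_left _
  have hconst := (hasSum_geometric_of_lt_one hγ0.le hγ1).mul_left (euclNorm (C *ᵥ xr) ^ 2)
  have hsum := ((((hgram.dotProduct_mulVec (xN - xr) (xN - xr)).add hconst).add
    ((hcross.dotProduct_mulVec xr (xN - xr)).mul_left 2)).mul_left (γ ^ N))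
  calc (∑' i : ℕ, γ ^ (N + i) * euclNorm (C *ᵥ x (N + i)) ^ 2)
      = ∑' k : ℕ, γ ^ N * (γ ^ k * euclNorm (C *ᵥ (Φ ^ k *ᵥ (xN - xr) + xr)) ^ 2) :=
        tsum_congr fun k => by rw [hx, pow_add, mul_assoc]
    _ = _ := by
        simp only [pow_mul_euclNorm_mulVec_pow_mulVec_add_sq]
        rw [hsum.tsum_eq, div_eq_mul_inv]
        ring
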